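/- Suppose n ≥ 3, D_1 = ℂ^N and D_i = 0 for 2 ≤ i ≤ n−1 (so p_i = 0 and q_i = 0 for i ≥ 2). Let (x, x̄, p, q) ∈ Λ^c(v,d), and set b_1 = 0 and b_i = c_1 + ⋯ + c_{i−1} for 2 ≤ i ≤ n. Then: (i) for every 1 ≤ k ≤ n−1, Π_{i=1}^{k} (q_1 p_1 − b_i·Id_{D_1}) = q_1 x̄_1 ⋯ x̄_{k−1} x_{k−1} ⋯ x_1 p_1 (the case k = 1 reading q_1 p_1 = q_1 p_1); in particular the rank of Π_{i=1}^{k} (q_1 p_1 − b_i·Id_{D_1}) is at most v_k; and (ii) Π_{i=1}^{n} (q_1 p_1 − b_i·Id_{D_1}) = 0. -/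

import Mathlib

/-!
Write `A_k = x̄_k x_k`. Away from vertex `1` there is no framing, so the relations read
`x_k x̄_k = c_{k+1} + A_{k+1}`, whence `x_k A_k = (c_{k+1} + A_{k+1}) x_k`: the endomorphism `A_1`
can be pushed along the path `x_{k-1} ⋯ x_1`, turning into `A_k + c_2 + ⋯ + c_k`. At vertex `1`
the relation is `p_1 q_1 = c_1 + A_1`, so right multiplication of `q_1 x̄_1 ⋯ x̄_{k-1} x_{k-1} ⋯ x_1 p_1`
by `q_1 p_1 - b_{k+1}` yields the same loop one vertex longer. For `k = n - 1` the longer loop passes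
through `x_{n-1} = 0`.
-/

namespace QuiverA

variable {V D : ℕ → Type} [∀ i, AddCommGroup (V i)] [∀ i, Module ℂ (V i)]
  [∀ i, AddCommGroup (D i)] [∀ i, Module ℂ (D i)]

/-- Composition `x_{i-1} ∘ ⋯ ∘ x_j : V_j → V_i` of the forward maps (identity when `i = j`,
junk `0` when `i < j`). -/
def xPath (x : ∀ i, V i →ₗ[ℂ] V (i + 1)) (j : ℕ) : (i : ℕ) → (V j →ₗ[ℂ] V i)
  | 0 => if h : j = 0 then h ▸ LinearMap.id else 0
  | (i + 1) => if h : j = i + 1 then h ▸ LinearMap.id else (x i) ∘ₗ xPath x j i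

/-- Composition `x̄_i ∘ ⋯ ∘ x̄_{j-1} : V_j → V_i` of the backward maps (identity when `i = j`,
junk `0` when `j < i`). -/
def xbarPath (xbar : ∀ i, V (i + 1) →ₗ[ℂ] V i) (i : ℕ) : (j : ℕ) → (V j →ₗ[ℂ] V i)
  | 0 => if h : i = 0 then (by rw [h]; exact LinearMap.id) else 0
  | (j + 1) => if h : i = j + 1 then (by rw [h]; exact LinearMap.id)
      else xbarPath xbar i j ∘ₗ (xbar j)

variable (x : ∀ i, V i →ₗ[ℂ] V (i + 1)) (xbar : ∀ i, V (i + 1) →ₗ[ℂ] V i)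

theorem xPath_self (j : ℕ) : xPath x j j = LinearMap.id := by
  cases j <;> simp [xPath]

theorem xPath_succ {j i : ℕ} (h : j ≤ i) : xPath x j (i + 1) = x i ∘ₗ xPath x j i := by
  rw [xPath, dif_neg (by omega)]

theorem xbarPath_self (i : ℕ) : xbarPath xbar i i = LinearMap.id := by
  cases i <;> simp [xbarPath]

theorem xbarPath_succ {i j : ℕ} (h : i ≤ j) :
    xbarPath xbar i (j + 1) = xbarPath xbar i j ∘ₗ xbar j := by
  rw [xbarPath, dif_neg (by omega)]

theorem xPath_comp_xbar_comp_x (c : ℕ → ℂ) {j m : ℕ}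
    (hrel : ∀ k, j ≤ k → k < m →
      x k ∘ₗ xbar k = c (k + 1) • LinearMap.id + xbar (k + 1) ∘ₗ x (k + 1))
    {k : ℕ} (hjk : j ≤ k) (hkm : k ≤ m) :
    xPath x j k ∘ₗ xbar j ∘ₗ x j
      = (∑ s ∈ Finset.Ioc j k, c s) • xPath x j k + xbar k ∘ₗ x k ∘ₗ xPath x j k := by
  induction k, hjk using Nat.le_induction with
  | base => simp [xPath_self]
  | succ k hjk ih =>
    rw [xPath_succ x hjk, LinearMap.comp_assoc, ih (by omega), LinearMap.comp_add,
      LinearMap.comp_smul, show x k ∘ₗ xbar k ∘ₗ x k ∘ₗ xPath x j k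
        = (x k ∘ₗ xbar k) ∘ₗ x k ∘ₗ xPath x j k from rfl, hrel k hjk (by omega),
      Finset.sum_Ioc_succ_top (by omega)]
    simp only [LinearMap.add_comp, LinearMap.smul_comp, LinearMap.id_comp, add_smul]
    abel

section Framing

variable {W : Type*} [AddCommGroup W] [Module ℂ W] (p₁ : W →ₗ[ℂ] V 1) (q₁ : V 1 →ₗ[ℂ] W)
  (c : ℕ → ℂ) {m : ℕ}

theorem comp_xbarPath_xPath_mul_sub_smul
    (hpq : p₁ ∘ₗ q₁ = c 1 • LinearMap.id + xbar 1 ∘ₗ x 1)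
    (hrel : ∀ k, 1 ≤ k → k < m →
      x k ∘ₗ xbar k = c (k + 1) • LinearMap.id + xbar (k + 1) ∘ₗ x (k + 1))
    {k : ℕ} (hk : 1 ≤ k) (hkm : k ≤ m) :
    (q₁ ∘ₗ xbarPath xbar 1 k ∘ₗ xPath x 1 k ∘ₗ p₁ : Module.End ℂ W)
        * (q₁ ∘ₗ p₁ - (∑ s ∈ Finset.Icc 1 k, c s) • 1)
      = q₁ ∘ₗ xbarPath xbar 1 k ∘ₗ xbar k ∘ₗ x k ∘ₗ xPath x 1 k ∘ₗ p₁ := by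
  have hpush := xPath_comp_xbar_comp_x x xbar c hrel hk hkm
  have hsum : ∑ s ∈ Finset.Icc 1 k, c s = c 1 + ∑ s ∈ Finset.Ioc 1 k, c s := by
    rw [Finset.Icc_eq_cons_Ioc hk, Finset.sum_cons]
  rw [mul_sub, mul_smul_comm, mul_one, Module.End.mul_eq_comp,
    show (q₁ ∘ₗ xbarPath xbar 1 k ∘ₗ xPath x 1 k ∘ₗ p₁) ∘ₗ q₁ ∘ₗ p₁
      = q₁ ∘ₗ xbarPath xbar 1 k ∘ₗ (xPath x 1 k ∘ₗ p₁ ∘ₗ q₁) ∘ₗ p₁ from rfl,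
    hpq, LinearMap.comp_add, LinearMap.comp_smul, LinearMap.comp_id, hpush, hsum]
  simp only [LinearMap.add_comp, LinearMap.smul_comp, LinearMap.comp_add, LinearMap.comp_smul,
    add_smul, LinearMap.comp_assoc]
  abel

theorem prod_sub_smul_eq_comp_xbarPath_xPath
    (hpq : p₁ ∘ₗ q₁ = c 1 • LinearMap.id + xbar 1 ∘ₗ x 1)
    (hrel : ∀ k, 1 ≤ k → k < m →
      x k ∘ₗ xbar k = c (k + 1) • LinearMap.id + xbar (k + 1) ∘ₗ x (k + 1))
    {b : ℕ → ℂ} (hb : ∀ t, b (t + 1) = ∑ s ∈ Finset.Icc 1 t, c s)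
    {k : ℕ} (hk : 1 ≤ k) (hkm : k ≤ m) :
    ((List.range k).map fun t => (q₁ ∘ₗ p₁ : Module.End ℂ W) - b (t + 1) • 1).prod
      = q₁ ∘ₗ xbarPath xbar 1 k ∘ₗ xPath x 1 k ∘ₗ p₁ := by
  induction k, hk using Nat.le_induction with
  | base => simp [hb, xPath_self, xbarPath_self]
  | succ k hk ih =>
    rw [List.range_succ, List.map_append, List.prod_append, ih (by omega), List.map_singleton,
      List.prod_singleton, hb, comp_xbarPath_xPath_mul_sub_smul x xbar p₁ q₁ c hpq hrel hk
        (by omega), xPath_succ x hk, xbarPath_succ xbar hk]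
    rfl

theorem prod_sub_smul_eq_zero
    (hpq : p₁ ∘ₗ q₁ = c 1 • LinearMap.id + xbar 1 ∘ₗ x 1)
    (hrel : ∀ k, 1 ≤ k → k < m →
      x k ∘ₗ xbar k = c (k + 1) • LinearMap.id + xbar (k + 1) ∘ₗ x (k + 1))
    {b : ℕ → ℂ} (hb : ∀ t, b (t + 1) = ∑ s ∈ Finset.Icc 1 t, c s)
    (hm : 1 ≤ m) (hxm : x m = 0) :
    ((List.range (m + 1)).map fun t => (q₁ ∘ₗ p₁ : Module.End ℂ W) - b (t + 1) • 1).prod = 0 := by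
  rw [List.range_succ, List.map_append, List.prod_append,
    prod_sub_smul_eq_comp_xbarPath_xPath x xbar p₁ q₁ c hpq hrel hb hm le_rfl, List.map_singleton,
    List.prod_singleton, hb, comp_xbarPath_xPath_mul_sub_smul x xbar p₁ q₁ c hpq hrel hm le_rfl,
    hxm]
  simp

end Framing

/-- The quiver data are total families of maps; those outside the index ranges of the
`A_{n-1}` quiver (such as `x 0` and `x (n - 1)` in `hrel`) are zero. -/
theorem stmt10_general (n : ℕ) (hn : 3 ≤ n)
    [∀ i, FiniteDimensional ℂ (V i)]
    (c : ℕ → ℂ)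
    (x : ∀ i, V i →ₗ[ℂ] V (i + 1)) (xbar : ∀ i, V (i + 1) →ₗ[ℂ] V i)
    (p : ∀ i, D i →ₗ[ℂ] V i) (q : ∀ i, V i →ₗ[ℂ] D i)
    (hx : ∀ i, ¬(1 ≤ i ∧ i + 1 ≤ n - 1) → x i = 0)
    (hp2 : ∀ i, 2 ≤ i → p i = 0)
    (hrel : ∀ i : ℕ, i + 1 ≤ n - 1 →
      (c (i + 1)) • (LinearMap.id : V (i + 1) →ₗ[ℂ] V (i + 1)) + (xbar (i + 1)) ∘ₗ (x (i + 1))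
        = (x i) ∘ₗ (xbar i) + (p (i + 1)) ∘ₗ (q (i + 1)))
    (b : ℕ → ℂ) (hb : ∀ i, b i = ∑ s ∈ Finset.Icc 1 (i - 1), c s) :
    (∀ k : ℕ, 1 ≤ k → k ≤ n - 1 →
      ((List.range k).map (fun t =>
          ((q 1 ∘ₗ p 1 : Module.End ℂ (D 1)) - (b (t + 1)) • 1))).prod
        = (q 1) ∘ₗ (xbarPath xbar 1 k) ∘ₗ (xPath x 1 k) ∘ₗ (p 1)
      ∧ LinearMap.rank
          (((List.range k).map (fun t =>
            ((q 1 ∘ₗ p 1 : Module.End ℂ (D 1)) - (b (t + 1)) • 1))).prod : Module.End ℂ (D 1))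
          ≤ (Module.finrank ℂ (V k) : Cardinal))
    ∧ ((List.range n).map (fun t =>
        ((q 1 ∘ₗ p 1 : Module.End ℂ (D 1)) - (b (t + 1)) • 1))).prod = 0 := by
  obtain ⟨m, rfl⟩ : ∃ m, n = m + 1 := ⟨n - 1, by omega⟩
  have hpq : p 1 ∘ₗ q 1 = c 1 • LinearMap.id + xbar 1 ∘ₗ x 1 := by
    simpa [hx 0 (by omega)] using (hrel 0 (by omega)).symm
  have hrel' : ∀ k, 1 ≤ k → k < m →
      x k ∘ₗ xbar k = c (k + 1) • LinearMap.id + xbar (k + 1) ∘ₗ x (k + 1) := by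
    intro k hk hkm
    simpa [hp2 (k + 1) (by omega)] using (hrel k (by omega)).symm
  have hb' : ∀ t, b (t + 1) = ∑ s ∈ Finset.Icc 1 t, c s := fun t => hb (t + 1)
  refine ⟨fun k hk hkm => ?_, prod_sub_smul_eq_zero x xbar (p 1) (q 1) c hpq hrel' hb' (by omega)
    (hx m (by omega))⟩
  rw [prod_sub_smul_eq_comp_xbarPath_xPath x xbar (p 1) (q 1) c hpq hrel' hb' hk (by omega),
    Module.finrank_eq_rank]
  exact ⟨rfl, (LinearMap.rank_comp_le_right (xPath x 1 k ∘ₗ p 1) (q 1 ∘ₗ xbarPath xbar 1 k)).trans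
    (LinearMap.rank_le_range _)⟩

/-- if `n ≥ 3`, `D_1 = ℂ^N` and `D_i = 0` for `2 ≤ i ≤ n−1` (encoded by
`p_i = 0`, `q_i = 0` for `i ≥ 2`), `(x, x̄, p, q) ∈ Λ^c(v,d)`, `b_1 = 0`,
`b_i = c_1 + ⋯ + c_{i−1}`, then:

(i) for every `1 ≤ k ≤ n−1`,
`Π_{i=1}^{k} (q_1 p_1 − b_i·Id) = q_1 x̄_1 ⋯ x̄_{k−1} x_{k−1} ⋯ x_1 p_1`, and in particular
the rank of `Π_{i=1}^{k} (q_1 p_1 − b_i·Id)` is at most `v_k = dim V_k`;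

(ii) `Π_{i=1}^{n} (q_1 p_1 − b_i·Id) = 0`.

The quadruple is encoded by total families of maps which vanish outside the index ranges
of the `A_{n-1}`-quiver, the relations of `Λ^c(v,d)` being the family
`c_{i+1}·Id + x̄_{i+1} x_{i+1} = x_i x̄_i + p_{i+1} q_{i+1}` (out-of-range terms zero). -/
theorem stmt10 (n N : ℕ) (hn : 3 ≤ n)
    [∀ i, FiniteDimensional ℂ (V i)] [∀ i, FiniteDimensional ℂ (D i)]
    (hD1 : Module.finrank ℂ (D 1) = N)
    (c : ℕ → ℂ)
    (x : ∀ i, V i →ₗ[ℂ] V (i + 1)) (xbar : ∀ i, V (i + 1) →ₗ[ℂ] V i)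
    (p : ∀ i, D i →ₗ[ℂ] V i) (q : ∀ i, V i →ₗ[ℂ] D i)
    (hx : ∀ i, ¬(1 ≤ i ∧ i + 1 ≤ n - 1) → x i = 0)
    (hxbar : ∀ i, ¬(1 ≤ i ∧ i + 1 ≤ n - 1) → xbar i = 0)
    (hp : ∀ i, ¬(1 ≤ i ∧ i ≤ n - 1) → p i = 0)
    (hq : ∀ i, ¬(1 ≤ i ∧ i ≤ n - 1) → q i = 0)
    (hp2 : ∀ i, 2 ≤ i → p i = 0)
    (hq2 : ∀ i, 2 ≤ i → q i = 0)
    (hrel : ∀ i : ℕ, i + 1 ≤ n - 1 →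
      (c (i + 1)) • (LinearMap.id : V (i + 1) →ₗ[ℂ] V (i + 1)) + (xbar (i + 1)) ∘ₗ (x (i + 1))
        = (x i) ∘ₗ (xbar i) + (p (i + 1)) ∘ₗ (q (i + 1)))
    (b : ℕ → ℂ) (hb : ∀ i, b i = ∑ s ∈ Finset.Icc 1 (i - 1), c s) :
    (∀ k : ℕ, 1 ≤ k → k ≤ n - 1 →
      ((List.range k).map (fun t =>
          ((q 1 ∘ₗ p 1 : Module.End ℂ (D 1)) - (b (t + 1)) • 1))).prod
        = (q 1) ∘ₗ (xbarPath xbar 1 k) ∘ₗ (xPath x 1 k) ∘ₗ (p 1)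
      ∧ LinearMap.rank
          (((List.range k).map (fun t =>
            ((q 1 ∘ₗ p 1 : Module.End ℂ (D 1)) - (b (t + 1)) • 1))).prod : Module.End ℂ (D 1))
          ≤ (Module.finrank ℂ (V k) : Cardinal))
    ∧ ((List.range n).map (fun t =>
        ((q 1 ∘ₗ p 1 : Module.End ℂ (D 1)) - (b (t + 1)) • 1))).prod = 0 :=
  stmt10_general n hn c x xbar p q hx hp2 hrel b hb

end QuiverA
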